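/- Let p ∈ (1,2], δ > 0 and A ≥ 1, set ω := ω_{p,δ}, and let M ∈ ℕ be such that (p−1)^{−1} ≤ 2^M. Then for all t ≥ 0 the complementary functions satisfy (ω^A)*(t) ≤ (p−1)·(Δ₂(ω*))^M·ω*(t), where Δ₂(ω*) is the Δ₂-constant of ω* (which is finite and depends only on p). -/

import Mathlib

/-!
For `p ≤ 2` the derivative `ω'(s) = (δ+s)^(p-2) s` is concave, so the derivative of `ω^A`,
which is `ω'` continued beyond `A` by its tangent line, dominates `ω'`. Inverting derivatives
reverses the inequality, hence `(ω^A)* ≤ ω*`. The doubling estimate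
`2 ω'(x) ≤ ω'(2^(1/(p-1)) x)` inverts and integrates to a Δ₂-condition for `ω*`; the admissible
Δ₂-constants form a closed set, so a least one `K` exists, and `K ≥ 2` gives
`(p-1) K^M ≥ (p-1) 2^M ≥ 1`.
-/

open Real Set MeasureTheory Filter Matrix

noncomputable section

/-- The N-function `omega_{p,delta}(t) = int_0^t (delta+s)^(p-2) s ds`. -/
def omg (p δ : ℝ) (t : ℝ) : ℝ := ∫ s in (0:ℝ)..t, (δ + s) ^ (p - 2) * s

/-- The `A`-approximation of a function `φ`: it equals `φ` on `[0,A]` and is the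
second-order Taylor polynomial of `φ` at `A` for `t > A`. -/
def approxA (φ : ℝ → ℝ) (A : ℝ) (t : ℝ) : ℝ :=
  if t ≤ A then φ t
  else (1/2) * deriv (deriv φ) A * t ^ 2 + (deriv φ A - deriv (deriv φ) A * A) * t
    + (φ A - deriv φ A * A + (1/2) * deriv (deriv φ) A * A ^ 2)

/-- `φ` is a regular N-function: continuous, convex, positive for `t > 0`,
`φ(t)/t → 0` as `t → 0⁺`, `φ(t)/t → ∞` as `t → ∞`, `C¹` on `[0,∞)`, `C²` on `(0,∞)`,
with `φ'' > 0` on `(0,∞)`. -/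
structure IsRegularNFunction (φ : ℝ → ℝ) : Prop where
  continuousOn : ContinuousOn φ (Set.Ici 0)
  convexOn : ConvexOn ℝ (Set.Ici 0) φ
  pos : ∀ t : ℝ, 0 < t → 0 < φ t
  tendsto_zero : Filter.Tendsto (fun t => φ t / t) (nhdsWithin 0 (Set.Ioi 0)) (nhds 0)
  tendsto_atTop : Filter.Tendsto (fun t => φ t / t) Filter.atTop Filter.atTop
  diffAt : ∀ t : ℝ, 0 < t → DifferentiableAt ℝ φ t
  deriv_continuousOn : ContinuousOn (deriv φ) (Set.Ici 0)
  diffAt2 : ∀ t : ℝ, 0 < t → DifferentiableAt ℝ (deriv φ) t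
  deriv2_continuousOn : ContinuousOn (deriv (deriv φ)) (Set.Ioi 0)
  deriv2_pos : ∀ t : ℝ, 0 < t → 0 < deriv (deriv φ) t

/-- `φ` is a balanced N-function with characteristics `(γ₁, γ₂)`:
`γ₁ φ'(t) ≤ t φ''(t) ≤ γ₂ φ'(t)` for all `t > 0`. -/
structure IsBalanced (φ : ℝ → ℝ) (γ₁ γ₂ : ℝ) : Prop where
  regular : IsRegularNFunction φ
  gamma1_mem : γ₁ ∈ Set.Ioc (0:ℝ) 1
  gamma2_ge : 1 ≤ γ₂
  lower : ∀ t : ℝ, 0 < t → γ₁ * deriv φ t ≤ t * deriv (deriv φ) t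
  upper : ∀ t : ℝ, 0 < t → t * deriv (deriv φ) t ≤ γ₂ * deriv φ t

/-- `ψ` satisfies the Δ₂-condition with constant `K`. -/
def SatisfiesDelta2 (ψ : ℝ → ℝ) (K : ℝ) : Prop :=
  2 ≤ K ∧ ∀ t : ℝ, 0 ≤ t → ψ (2 * t) ≤ K * ψ t

/-- The complementary N-function `φ*(t) = ∫₀ᵗ (φ')⁻¹(s) ds`, where `(φ')⁻¹` is the
inverse on `[0,∞)` of the (strictly increasing) derivative `φ'`. -/
def conj (φ : ℝ → ℝ) (t : ℝ) : ℝ :=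
  ∫ s in (0:ℝ)..t, Function.invFunOn (deriv φ) (Set.Ici 0) s

section Conjugate

open Function

variable {f g φ ψ : ℝ → ℝ}

lemma monotoneOn_invFunOn_Ici (hf : StrictMonoOn f (Ici 0)) (hfs : SurjOn f (Ici 0) (Ici 0)) :
    MonotoneOn (invFunOn f (Ici 0)) (Ici 0) := fun a ha b hb hab => by
  rwa [← hf.le_iff_le (hfs.mapsTo_invFunOn ha) (hfs.mapsTo_invFunOn hb),
    hfs.rightInvOn_invFunOn ha, hfs.rightInvOn_invFunOn hb]

lemma invFunOn_Ici_le_of_le (hf : StrictMonoOn f (Ici 0)) (hfs : SurjOn f (Ici 0) (Ici 0))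
    (hgs : SurjOn g (Ici 0) (Ici 0)) (hfg : ∀ x, 0 ≤ x → f x ≤ g x) {s : ℝ} (hs : 0 ≤ s) :
    invFunOn g (Ici 0) s ≤ invFunOn f (Ici 0) s := by
  have hg : 0 ≤ invFunOn g (Ici 0) s := hgs.mapsTo_invFunOn hs
  rw [← hf.le_iff_le hg (hfs.mapsTo_invFunOn hs), hfs.rightInvOn_invFunOn hs]
  calc f (invFunOn g (Ici 0) s) ≤ g (invFunOn g (Ici 0) s) := hfg _ hg
    _ = s := hgs.rightInvOn_invFunOn hs

lemma invFunOn_Ici_two_mul_le (hf : StrictMonoOn f (Ici 0)) (hfs : SurjOn f (Ici 0) (Ici 0))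
    {C : ℝ} (hC : 0 ≤ C) (hdbl : ∀ x, 0 ≤ x → 2 * f x ≤ f (C * x)) {s : ℝ} (hs : 0 ≤ s) :
    invFunOn f (Ici 0) (2 * s) ≤ C * invFunOn f (Ici 0) s := by
  have h2s : (0 : ℝ) ≤ 2 * s := by positivity
  have hx : 0 ≤ invFunOn f (Ici 0) s := hfs.mapsTo_invFunOn hs
  rw [← hf.le_iff_le (hfs.mapsTo_invFunOn h2s) (mem_Ici.2 (mul_nonneg hC hx)),
    hfs.rightInvOn_invFunOn h2s]
  calc 2 * s = 2 * f (invFunOn f (Ici 0) s) := by rw [hfs.rightInvOn_invFunOn hs]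
    _ ≤ f (C * invFunOn f (Ici 0) s) := hdbl _ hx

lemma MonotoneOn.intervalIntegrable_Ici {h : ℝ → ℝ} (hh : MonotoneOn h (Ici 0)) {t : ℝ}
    (ht : 0 ≤ t) : IntervalIntegrable h volume 0 t :=
  (hh.mono (by simp [uIcc_of_le ht, Icc_subset_Ici_self])).intervalIntegrable

lemma conj_nonneg (hφ : SurjOn (deriv φ) (Ici 0) (Ici 0)) {t : ℝ} (ht : 0 ≤ t) :
    0 ≤ conj φ t :=
  intervalIntegral.integral_nonneg ht fun _ hu => hφ.mapsTo_invFunOn (mem_Ici.2 hu.1)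

lemma conj_le_conj (hφ : StrictMonoOn (deriv φ) (Ici 0)) (hφs : SurjOn (deriv φ) (Ici 0) (Ici 0))
    (hψ : StrictMonoOn (deriv ψ) (Ici 0)) (hψs : SurjOn (deriv ψ) (Ici 0) (Ici 0))
    (hφψ : ∀ x, 0 ≤ x → deriv φ x ≤ deriv ψ x) {t : ℝ} (ht : 0 ≤ t) :
    conj ψ t ≤ conj φ t :=
  intervalIntegral.integral_mono_on ht
    ((monotoneOn_invFunOn_Ici hψ hψs).intervalIntegrable_Ici ht)
    ((monotoneOn_invFunOn_Ici hφ hφs).intervalIntegrable_Ici ht)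
    fun _ hu => invFunOn_Ici_le_of_le hφ hφs hψs hφψ hu.1

/-- The doubling estimate for `φ'` inverts to `(φ')⁻¹(2 s) ≤ C (φ')⁻¹(s)`, which integrates to
the Δ₂-condition for `φ*`. -/
lemma satisfiesDelta2_conj (hφ : StrictMonoOn (deriv φ) (Ici 0))
    (hφs : SurjOn (deriv φ) (Ici 0) (Ici 0)) {C : ℝ} (hC : 1 ≤ C)
    (hdbl : ∀ x, 0 ≤ x → 2 * deriv φ x ≤ deriv φ (C * x)) :
    SatisfiesDelta2 (conj φ) (2 * C) := by
  refine ⟨by linarith, fun t ht => ?_⟩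
  set H := invFunOn (deriv φ) (Ici 0)
  have hH := monotoneOn_invFunOn_Ici hφ hφs
  have hH2 : MonotoneOn (fun u => H (2 * u)) (Ici 0) := fun a ha b hb hab =>
    hH (mem_Ici.2 (by linarith [mem_Ici.1 ha])) (mem_Ici.2 (by linarith [mem_Ici.1 hb]))
      (by linarith)
  have hsub : conj φ (2 * t) = 2 * ∫ u in (0 : ℝ)..t, H (2 * u) := by
    simp only [conj, intervalIntegral.mul_integral_comp_mul_left, mul_zero]
    rfl
  calc conj φ (2 * t) = 2 * ∫ u in (0 : ℝ)..t, H (2 * u) := hsub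
    _ ≤ 2 * ∫ u in (0 : ℝ)..t, C * H u := by
      gcongr
      exact intervalIntegral.integral_mono_on ht (hH2.intervalIntegrable_Ici ht)
        ((hH.intervalIntegrable_Ici ht).const_mul C)
        fun u hu => invFunOn_Ici_two_mul_le hφ hφs (by linarith) hdbl hu.1
    _ = 2 * C * conj φ t := by rw [intervalIntegral.integral_const_mul, mul_assoc]; rfl

/-- The Δ₂-constants of `ψ` form a closed set, so once there is one there is a least one. -/
lemma SatisfiesDelta2.exists_isLeast {K₀ : ℝ} (h : SatisfiesDelta2 ψ K₀) :
    ∃ K, IsLeast {K | SatisfiesDelta2 ψ K} K := by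
  have hclosed : IsClosed {K | SatisfiesDelta2 ψ K} := by
    simp only [SatisfiesDelta2, ofPred_and, ofPred_forall]
    exact isClosed_le continuous_const continuous_id |>.inter <| isClosed_iInter fun t =>
      isClosed_iInter fun _ => isClosed_le continuous_const (continuous_id.mul continuous_const)
  exact ⟨_, hclosed.isLeast_csInf ⟨K₀, h⟩ ⟨2, fun K hK => hK.1⟩⟩

end Conjugate

def affineExtension (f : ℝ → ℝ) (A c : ℝ) (t : ℝ) : ℝ :=
  if t ≤ A then f t else f A + c * (t - A)

section AffineExtension

variable {f : ℝ → ℝ} {A c : ℝ}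

lemma affineExtension_strictMonoOn (hf : StrictMonoOn f (Ici 0)) (hA : 0 ≤ A) (hc : 0 < c) :
    StrictMonoOn (affineExtension f A c) (Ici 0) := by
  intro x hx y hy hxy
  simp only [affineExtension]
  split_ifs with hxA hyA hyA
  · exact hf hx hy hxy
  · exact (hf.monotoneOn hx (mem_Ici.2 hA) hxA).trans_lt (by nlinarith)
  · linarith
  · nlinarith

lemma affineExtension_surjOn (hf : StrictMonoOn f (Ici 0)) (hfs : SurjOn f (Ici 0) (Ici 0))
    (hA : 0 ≤ A) (hc : 0 < c) : SurjOn (affineExtension f A c) (Ici 0) (Ici 0) := by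
  intro s hs
  rcases le_or_gt s (f A) with hsA | hsA
  · obtain ⟨x, hx, rfl⟩ := hfs hs
    have hxA : x ≤ A := (hf.le_iff_le hx (mem_Ici.2 hA)).1 hsA
    exact ⟨x, hx, if_pos hxA⟩
  · have hpos : 0 < (s - f A) / c := div_pos (by linarith) hc
    refine ⟨A + (s - f A) / c, mem_Ici.2 (by linarith), ?_⟩
    rw [affineExtension, if_neg (by linarith)]
    field_simp
    ring

end AffineExtension

/-- At `A` the one-sided derivatives agree because the Taylor polynomial matches `φ` to first
order there. -/
lemma hasDerivAt_approxA {φ : ℝ → ℝ} {A t : ℝ} (hφ : ∀ x ∈ Icc t A, DifferentiableAt ℝ φ x) :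
    HasDerivAt (approxA φ A) (affineExtension (deriv φ) A (deriv (deriv φ) A) t) t := by
  set c := deriv (deriv φ) A
  set q : ℝ → ℝ := fun x => (1/2) * c * x ^ 2 + (deriv φ A - c * A) * x
    + (φ A - deriv φ A * A + (1/2) * c * A ^ 2)
  have hq : ∀ x, HasDerivAt q (deriv φ A + c * (x - A)) x := fun x =>
    ((((hasDerivAt_pow 2 x).const_mul ((1/2) * c)).add
      ((hasDerivAt_id x).const_mul (deriv φ A - c * A))).add_const _).congr_deriv (by
      simp only [one_div, Nat.cast_ofNat, Nat.add_one_sub_one, pow_one, mul_one]; ring)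
  have happrox : approxA φ A = fun x => if x ≤ A then φ x else q x := rfl
  rw [affineExtension]
  rcases lt_trichotomy t A with htA | rfl | htA
  · rw [if_pos htA.le]
    refine (hφ t ⟨le_rfl, htA.le⟩).hasDerivAt.congr_of_eventuallyEq ?_
    filter_upwards [Iio_mem_nhds htA] with x hx
    exact if_pos (le_of_lt hx)
  · rw [if_pos le_rfl]
    have hleft : HasDerivWithinAt (approxA φ t) (deriv φ t) (Iic t) t :=
      (hφ t ⟨le_rfl, le_rfl⟩).hasDerivAt.hasDerivWithinAt.congr
        (fun x hx => if_pos (mem_Iic.1 hx)) (if_pos le_rfl)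
    have hqt : q t = φ t := by simp only [q]; ring
    have hright : HasDerivWithinAt (approxA φ t) (deriv φ t) (Ici t) t := by
      refine (by simpa using (hq t).hasDerivWithinAt :
        HasDerivWithinAt q (deriv φ t) (Ici t) t).congr (fun x hx => ?_) (by simp [happrox, hqt])
      rcases (mem_Ici.1 hx).eq_or_lt with rfl | hlt
      · simp [happrox, hqt]
      · simp [happrox, not_le.2 hlt]
    simpa [Iic_union_Ici] using hleft.union hright
  · rw [if_neg (not_le.2 htA)]
    refine (hq t).congr_of_eventuallyEq ?_
    filter_upwards [Ioi_mem_nhds htA] with x hx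
    exact if_neg (not_le.2 hx)

def omg' (p δ : ℝ) (s : ℝ) : ℝ := (δ + s) ^ (p - 2) * s

def omg'' (p δ : ℝ) (s : ℝ) : ℝ := (δ + s) ^ (p - 3) * (δ + (p - 1) * s)

section Omega

variable {p δ : ℝ}

lemma hasDerivAt_omg' {s : ℝ} (hs : -δ < s) : HasDerivAt (omg' p δ) (omg'' p δ s) s := by
  have hδs : 0 < δ + s := by linarith
  refine ((((hasDerivAt_id s).const_add δ).rpow_const (p := p - 2) (Or.inl hδs.ne')).mul
    (hasDerivAt_id s)).congr_deriv ?_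
  have h : (δ + s) ^ (p - 2) = (δ + s) ^ (p - 3) * (δ + s) := by
    rw [← rpow_add_one hδs.ne']; ring_nf
  simp only [id, omg'', sub_sub, show (2 : ℝ) + 1 = 3 by norm_num, h]
  ring

lemma continuousOn_omg' : ContinuousOn (omg' p δ) (Ioi (-δ)) :=
  fun _ hs => (hasDerivAt_omg' hs).continuousAt.continuousWithinAt

lemma hasDerivAt_omg (hδ : 0 < δ) {t : ℝ} (ht : -δ < t) : HasDerivAt (omg p δ) (omg' p δ t) t :=
  intervalIntegral.integral_hasDerivAt_right
    (continuousOn_omg'.mono fun x hx => by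
      rcases mem_uIcc.1 hx with h | h <;> exact mem_Ioi.2 (by linarith [h.1])).intervalIntegrable
    (continuousOn_omg'.stronglyMeasurableAtFilter isOpen_Ioi t ht)
    (continuousOn_omg'.continuousAt (Ioi_mem_nhds ht))

lemma deriv_deriv_omg (hδ : 0 < δ) {t : ℝ} (ht : -δ < t) :
    deriv (deriv (omg p δ)) t = omg'' p δ t := by
  have h : deriv (omg p δ) =ᶠ[nhds t] omg' p δ := by
    filter_upwards [Ioi_mem_nhds ht] with x hx using (hasDerivAt_omg hδ hx).deriv
  rw [h.deriv_eq, (hasDerivAt_omg' ht).deriv]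

lemma eqOn_deriv_omg (hδ : 0 < δ) : EqOn (deriv (omg p δ)) (omg' p δ) (Ici 0) :=
  fun _ ht => (hasDerivAt_omg hδ (by linarith [mem_Ici.1 ht])).deriv

lemma eqOn_deriv_approxA_omg (hδ : 0 < δ) {A : ℝ} (hA : 0 ≤ A) :
    EqOn (deriv (approxA (omg p δ) A)) (affineExtension (omg' p δ) A (omg'' p δ A)) (Ici 0) := by
  intro t ht
  have ht : 0 ≤ t := ht
  rw [(hasDerivAt_approxA fun x hx =>
      (hasDerivAt_omg hδ (by linarith [hx.1])).differentiableAt).deriv,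
    deriv_deriv_omg hδ (by linarith), affineExtension, affineExtension,
    eqOn_deriv_omg hδ (mem_Ici.2 hA)]
  split_ifs
  · exact eqOn_deriv_omg hδ (mem_Ici.2 ht)
  · rfl

lemma omg''_pos (hp : 1 < p) (hδ : 0 < δ) {s : ℝ} (hs : 0 ≤ s) : 0 < omg'' p δ s :=
  mul_pos (rpow_pos_of_pos (by linarith) _) (by nlinarith)

lemma omg'_strictMonoOn (hp : 1 < p) (hδ : 0 < δ) : StrictMonoOn (omg' p δ) (Ici 0) :=
  strictMonoOn_of_deriv_pos (convex_Ici 0)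
    (continuousOn_omg'.mono fun _ hx => mem_Ioi.2 (by linarith [mem_Ici.1 hx]))
    fun x hx => by
      rw [interior_Ici] at hx
      rw [(hasDerivAt_omg' (by linarith [mem_Ioi.1 hx])).deriv]
      exact omg''_pos hp hδ (le_of_lt hx)

/-- `ω'(s) = (δ+s)^(p-1) - δ (δ+s)^(p-2)` and `(δ+s)^(p-2) ≤ δ^(p-2)`. -/
lemma rpow_sub_rpow_le_omg' (hp : p ≤ 2) (hδ : 0 < δ) {s : ℝ} (hs : 0 ≤ s) :
    (δ + s) ^ (p - 1) - δ ^ (p - 1) ≤ omg' p δ s := by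
  have hδs : 0 < δ + s := by linarith
  have h1 : (δ + s) ^ (p - 1) = (δ + s) ^ (p - 2) * (δ + s) := by
    rw [← rpow_add_one hδs.ne']; ring_nf
  have h2 : δ ^ (p - 1) = δ ^ (p - 2) * δ := by
    rw [← rpow_add_one hδ.ne']; ring_nf
  have h3 : (δ + s) ^ (p - 2) ≤ δ ^ (p - 2) :=
    rpow_le_rpow_of_nonpos hδ (by linarith) (by linarith)
  rw [omg', h1, h2]
  nlinarith

lemma omg'_surjOn (hp : p ∈ Ioc (1 : ℝ) 2) (hδ : 0 < δ) :
    SurjOn (omg' p δ) (Ici 0) (Ici 0) := by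
  have hcont : ContinuousOn (omg' p δ) (Ici 0) :=
    continuousOn_omg'.mono fun _ hx => mem_Ioi.2 (by linarith [mem_Ici.1 hx])
  have hlower : Tendsto (fun s => (δ + s) ^ (p - 1) - δ ^ (p - 1)) atTop atTop :=
    tendsto_atTop_add_const_right _ _
      ((tendsto_rpow_atTop (by linarith [hp.1])).comp (tendsto_atTop_add_const_left _ δ tendsto_id))
  have htop : Tendsto (omg' p δ) atTop atTop :=
    tendsto_atTop_mono' _ (eventually_ge_atTop 0 |>.mono fun s hs =>
      rpow_sub_rpow_le_omg' hp.2 hδ hs) hlower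
  have h := intermediate_value_Ici hcont htop
  rwa [show omg' p δ 0 = 0 by simp [omg']] at h

lemma strictMonoOn_deriv_omg (hp : 1 < p) (hδ : 0 < δ) :
    StrictMonoOn (deriv (omg p δ)) (Ici 0) :=
  (omg'_strictMonoOn hp hδ).congr (eqOn_deriv_omg hδ).symm

lemma surjOn_deriv_omg (hp : p ∈ Ioc (1 : ℝ) 2) (hδ : 0 < δ) :
    SurjOn (deriv (omg p δ)) (Ici 0) (Ici 0) :=
  (omg'_surjOn hp hδ).congr (eqOn_deriv_omg hδ).symm

lemma strictMonoOn_deriv_approxA_omg (hp : 1 < p) (hδ : 0 < δ) {A : ℝ} (hA : 0 ≤ A) :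
    StrictMonoOn (deriv (approxA (omg p δ) A)) (Ici 0) :=
  (affineExtension_strictMonoOn (omg'_strictMonoOn hp hδ) hA (omg''_pos hp hδ hA)).congr
    (eqOn_deriv_approxA_omg hδ hA).symm

lemma surjOn_deriv_approxA_omg (hp : p ∈ Ioc (1 : ℝ) 2) (hδ : 0 < δ) {A : ℝ} (hA : 0 ≤ A) :
    SurjOn (deriv (approxA (omg p δ) A)) (Ici 0) (Ici 0) :=
  (affineExtension_surjOn (omg'_strictMonoOn hp.1 hδ) (omg'_surjOn hp hδ) hA
    (omg''_pos hp.1 hδ hA)).congr (eqOn_deriv_approxA_omg hδ hA).symm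

/-- For `p ≤ 2`, `ω'' = (δ+s)^(p-2) ((p-1) + (2-p) δ/(δ+s))` is a product of nonnegative
antitone factors. -/
lemma omg''_antitoneOn (hp : p ∈ Ioc (1 : ℝ) 2) (hδ : 0 < δ) : AntitoneOn (omg'' p δ) (Ici 0) := by
  have key : ∀ x, 0 ≤ x →
      omg'' p δ x = (δ + x) ^ (p - 2) * ((p - 1) + (2 - p) * δ / (δ + x)) := by
    intro x hx
    have hδx : 0 < δ + x := by linarith
    have h : (δ + x) ^ (p - 2) = (δ + x) ^ (p - 3) * (δ + x) := by
      rw [← rpow_add_one hδx.ne']; ring_nf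
    rw [omg'', h]
    field_simp
    ring
  intro s (hs : 0 ≤ s) t (ht : 0 ≤ t) hst
  obtain ⟨hp1, hp2⟩ := hp
  rw [key t ht, key s hs]
  apply mul_le_mul (rpow_le_rpow_of_nonpos (by linarith) (by linarith) (by linarith))
  · gcongr
  · have : 0 ≤ (2 - p) * δ / (δ + t) := div_nonneg (by nlinarith) (by linarith)
    linarith
  · exact (rpow_pos_of_pos (by linarith) _).le

lemma omg'_le_tangent (hp : p ∈ Ioc (1 : ℝ) 2) (hδ : 0 < δ) {A t : ℝ} (hA : 0 ≤ A)
    (ht : A ≤ t) : omg' p δ t ≤ omg' p δ A + omg'' p δ A * (t - A) := by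
  have hsub : Ici A ⊆ Ioi (-δ) := fun x hx => mem_Ioi.2 (by linarith [mem_Ici.1 hx])
  have := (convex_Ici A).image_sub_le_mul_sub_of_deriv_le (continuousOn_omg'.mono hsub)
    (fun x hx =>
      (hasDerivAt_omg' (hsub (interior_subset hx))).differentiableAt.differentiableWithinAt)
    (fun x hx => by
      rw [interior_Ici] at hx
      rw [(hasDerivAt_omg' (hsub (mem_Ici_of_Ioi hx))).deriv]
      exact omg''_antitoneOn hp hδ (mem_Ici.2 hA) (mem_Ici.2 (by linarith [mem_Ioi.1 hx]))
        (le_of_lt hx))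
    A self_mem_Ici t ht ht
  linarith

lemma deriv_omg_le_deriv_approxA_omg (hp : p ∈ Ioc (1 : ℝ) 2) (hδ : 0 < δ) {A x : ℝ}
    (hA : 0 ≤ A) (hx : 0 ≤ x) : deriv (omg p δ) x ≤ deriv (approxA (omg p δ) A) x := by
  rw [eqOn_deriv_omg hδ hx, eqOn_deriv_approxA_omg hδ hA hx, affineExtension]
  split_ifs with hxA
  · exact le_rfl
  · exact omg'_le_tangent hp hδ hA (le_of_not_ge hxA)

/-- With `C = 2^(1/(p-1))`, `2 ω'(x) = C^(p-1) (δ+x)^(p-2) x ≤ (δ + C x)^(p-2) C x = ω'(C x)`,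
using `δ + C x ≤ C (δ + x)` and `p - 2 ≤ 0`. -/
lemma two_mul_omg'_le (hp : p ∈ Ioc (1 : ℝ) 2) (hδ : 0 < δ) {x : ℝ} (hx : 0 ≤ x) :
    2 * omg' p δ x ≤ omg' p δ ((2 : ℝ) ^ (p - 1)⁻¹ * x) := by
  obtain ⟨hp1, hp2⟩ := hp
  set C : ℝ := (2 : ℝ) ^ (p - 1)⁻¹
  have hC1 : 1 ≤ C := one_le_rpow one_le_two (inv_pos.2 (by linarith)).le
  have hCp : C ^ (p - 2) * C = 2 := by
    rw [← rpow_add_one (by positivity), show p - 2 + 1 = p - 1 by ring]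
    exact rpow_inv_rpow (by norm_num) (by linarith)
  have hδx : 0 < δ + x := by linarith
  have hle : (C * (δ + x)) ^ (p - 2) ≤ (δ + C * x) ^ (p - 2) :=
    rpow_le_rpow_of_nonpos (by positivity) (by nlinarith) (by linarith)
  rw [mul_rpow (by positivity) hδx.le] at hle
  calc 2 * omg' p δ x = (C ^ (p - 2) * C) * ((δ + x) ^ (p - 2) * x) := by rw [hCp, omg']
    _ = (C ^ (p - 2) * (δ + x) ^ (p - 2)) * (C * x) := by ring
    _ ≤ (δ + C * x) ^ (p - 2) * (C * x) := by gcongr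
    _ = omg' p δ (C * x) := rfl

end Omega

/-- For `p ∈ (1,2]`, `δ > 0`, `A ≥ 1` and `M ∈ ℕ` with
`(p−1)⁻¹ ≤ 2^M`, the complementary functions satisfy
`(ω^A)*(t) ≤ (p−1)·(Δ₂(ω*))^M·ω*(t)` for all `t ≥ 0`, where `Δ₂(ω*)` is the
(smallest, finite) Δ₂-constant of `ω*`. -/
theorem stmt7 (p δ A : ℝ) (hp : p ∈ Set.Ioc (1:ℝ) 2) (hδ : 0 < δ) (hA : 1 ≤ A)
    (M : ℕ) (hM : (p - 1)⁻¹ ≤ 2 ^ M) :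
    ∃ K : ℝ, SatisfiesDelta2 (conj (omg p δ)) K ∧
      (∀ K' : ℝ, SatisfiesDelta2 (conj (omg p δ)) K' → K ≤ K') ∧
      ∀ t : ℝ, 0 ≤ t →
        conj (approxA (omg p δ) A) t ≤ (p - 1) * K ^ M * conj (omg p δ) t := by
  have hp1 : 1 < p := hp.1
  have hA0 : 0 ≤ A := by linarith
  have hω := strictMonoOn_deriv_omg hp1 hδ
  have hωs := surjOn_deriv_omg hp hδ
  have hΔ₂ : SatisfiesDelta2 (conj (omg p δ)) (2 * 2 ^ (p - 1)⁻¹) :=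
    satisfiesDelta2_conj hω hωs (one_le_rpow one_le_two (inv_pos.2 (by linarith)).le)
      fun x hx => by
        rw [eqOn_deriv_omg hδ hx, eqOn_deriv_omg hδ (mem_Ici.2 (by positivity))]
        exact two_mul_omg'_le hp hδ hx
  obtain ⟨K, hK, hKmin⟩ := hΔ₂.exists_isLeast
  refine ⟨K, hK, hKmin, fun t ht => ?_⟩
  have hone : 1 ≤ (p - 1) * K ^ M := by
    rw [← inv_le_iff_one_le_mul₀' (by linarith)]
    exact hM.trans (pow_le_pow_left₀ zero_le_two hK.1 M)
  calc conj (approxA (omg p δ) A) t ≤ conj (omg p δ) t :=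
        conj_le_conj hω hωs (strictMonoOn_deriv_approxA_omg hp1 hδ hA0)
          (surjOn_deriv_approxA_omg hp hδ hA0)
          (fun _ hx => deriv_omg_le_deriv_approxA_omg hp hδ hA0 hx) ht
    _ ≤ (p - 1) * K ^ M * conj (omg p δ) t := le_mul_of_one_le_left (conj_nonneg hωs ht) hone

end
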